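/- Assume ∫ π_β (|ℓ| + |log q₀|) dμ < ∞ for every β ∈ [0,1], and assume η ↦ Z_η is three times continuously differentiable on [0,1] with derivatives given by differentiation under the integral sign, i.e., the j-th derivative of Z_η equals ∫ γ_η ℓ^j dμ for j = 1, 2, 3, each finite and continuous in η. Then there exists a constant C ≥ 0 such that for every integer K ≥ 1, with equally spaced temperatures β_k = k/K, | ∑_{k=1}^{K} D_KL(π_{(k−1)/K} ‖ π_{k/K}) − (1/(2K)) ( D_KL(p ‖ q₀) + D_KL(q₀ ‖ p) ) | ≤ C / K². -/

import Mathlib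

/-!
With `L = log Z`, one has `log π_η = log q₀ + η ℓ - L(η)`, hence
`KL(π_a ‖ π_b) = (a - b) L'(a) + L(b) - L(a)` with `L' = Z'/Z = E_{π_η}[ℓ]`. Summed over the
grid `k/K` this telescopes to `-(1/K) ∑_{j<K} L'(j/K)`, while `KL(p‖q₀) + KL(q₀‖p) = L'(1) - L'(0)`
and `∫₀¹ L' = L(1) - L(0) = 0`. So the gap is exactly minus the error of the composite trapezoidal
rule for `L'`, which is `O(1/K²)` because `L'` has a continuous second derivative on `[0, 1]`.

The pointwise identity for `log π_η` needs `p > 0` wherever `q₀ > 0`. This is forced by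
continuity of `Z` at `0`: by dominated convergence `Z_η → ∫_{p ≠ 0} q₀` as `η → 0⁺`,
while `Z₀ = ∫ q₀`.
-/

open MeasureTheory Real Filter

noncomputable section

variable {X : Type*} [MeasurableSpace X]

/-- Geometric annealing path `γ_η = q₀^{1-η} p^η`, set to `0` where `q₀` vanishes. -/
def gammaPath (q0 p : X → ℝ) (η : ℝ) (z : X) : ℝ :=
  if q0 z = 0 then 0 else q0 z ^ (1 - η) * p z ^ η

/-- Normalization constant `Z_η = ∫ γ_η dμ` along the annealing path. -/
def Zpath (μ : Measure X) (q0 p : X → ℝ) (η : ℝ) : ℝ :=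
  ∫ z, gammaPath q0 p η z ∂μ

/-- Normalized annealing density `π_η = γ_η / Z_η`. -/
def piPath (μ : Measure X) (q0 p : X → ℝ) (η : ℝ) (z : X) : ℝ :=
  gammaPath q0 p η z / Zpath μ q0 p η

/-- Kullback–Leibler divergence `D_KL(a‖b) = ∫ a log(a/b) dμ` between densities. -/
def KLdiv (μ : Measure X) (a b : X → ℝ) : ℝ :=
  ∫ z, a z * Real.log (a z / b z) ∂μ


/-- `ℓ = log(p/q₀)`. -/
def ell (q0 p : X → ℝ) (z : X) : ℝ := Real.log (p z / q0 z)

open Set Topology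

section Calculus

variable {a b : ℝ}

theorem HasDerivWithinAt.div_sub_div_mul_div {f Z : ℝ → ℝ} {f' Z' t : ℝ} {s : Set ℝ}
    (hf : HasDerivWithinAt f f' s t) (hZ : HasDerivWithinAt Z Z' s t) (h : Z t ≠ 0) :
    HasDerivWithinAt (fun x => f x / Z x) (f' / Z t - f t / Z t * (Z' / Z t)) s t :=
  (hf.div hZ h).congr_deriv (by field_simp)

theorem exists_trapezoidal_error_le {F F' F'' : ℝ → ℝ} (hab : a < b)
    (hF : ∀ t ∈ Icc a b, HasDerivWithinAt F (F' t) (Icc a b) t)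
    (hF' : ∀ t ∈ Icc a b, HasDerivWithinAt F' (F'' t) (Icc a b) t)
    (hF'' : ContinuousOn F'' (Icc a b)) :
    ∃ C, 0 ≤ C ∧ ∀ N : ℕ, 0 < N → |trapezoidal_error F N a b| ≤ C / N ^ 2 := by
  obtain ⟨M, hM⟩ := isCompact_Icc.exists_bound_of_continuousOn hF''
  have hderiv : EqOn (derivWithin F (Icc a b)) F' (Icc a b) := fun t ht =>
    (hF t ht).derivWithin (uniqueDiffOn_Icc hab t ht)
  have hbound : ∀ t, |iteratedDerivWithin 2 F (Icc a b) t| ≤ max M 0 := by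
    intro t
    rw [iteratedDerivWithin_eq_iterate, Function.iterate_succ_apply', Function.iterate_one]
    by_cases ht : t ∈ Icc a b
    · rw [derivWithin_congr hderiv (hderiv ht),
        (hF' t ht).derivWithin (uniqueDiffOn_Icc hab t ht)]
      exact (hM t ht).trans (le_max_left _ _)
    · rw [derivWithin_zero_of_notMem_closure (by rwa [closure_Icc])]
      simp
  refine ⟨(b - a) ^ 3 * max M 0 / 12, by have := hab.le; positivity, fun N hN => ?_⟩
  rw [← uIcc_of_le hab.le] at hF hF' hderiv hbound
  have h := trapezoidal_error_le (fun t ht => (hF t ht).differentiableWithinAt)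
    (fun t ht => (hF' t ht).differentiableWithinAt.congr hderiv (hderiv ht)) hbound hN
  rwa [abs_of_pos (sub_pos.2 hab), ← div_div] at h

theorem exists_trapezoidal_error_div_le {Z Z₁ Z₂ Z₃ : ℝ → ℝ} (hab : a < b)
    (hZ : ∀ t ∈ Icc a b, HasDerivWithinAt Z (Z₁ t) (Icc a b) t)
    (hZ₁ : ∀ t ∈ Icc a b, HasDerivWithinAt Z₁ (Z₂ t) (Icc a b) t)
    (hZ₂ : ∀ t ∈ Icc a b, HasDerivWithinAt Z₂ (Z₃ t) (Icc a b) t)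
    (hZ₃ : ContinuousOn Z₃ (Icc a b)) (hZ0 : ∀ t ∈ Icc a b, Z t ≠ 0) :
    ∃ C, 0 ≤ C ∧ ∀ N : ℕ, 0 < N →
      |trapezoidal_error (fun t => Z₁ t / Z t) N a b| ≤ C / N ^ 2 := by
  have hcont : ∀ {f f' : ℝ → ℝ}, (∀ t ∈ Icc a b, HasDerivWithinAt f (f' t) (Icc a b) t) →
      ContinuousOn f (Icc a b) := fun h t ht => (h t ht).continuousWithinAt
  -- `m_j := Z_j / Z` satisfies `m_j' = m_{j+1} - m_j m_1`.
  refine exists_trapezoidal_error_le hab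
    (F' := fun t => Z₂ t / Z t - Z₁ t / Z t * (Z₁ t / Z t))
    (F'' := fun t => (Z₃ t / Z t - Z₂ t / Z t * (Z₁ t / Z t))
      - ((Z₂ t / Z t - Z₁ t / Z t * (Z₁ t / Z t)) * (Z₁ t / Z t)
        + Z₁ t / Z t * (Z₂ t / Z t - Z₁ t / Z t * (Z₁ t / Z t))))
    (fun t ht => (hZ₁ t ht).div_sub_div_mul_div (hZ t ht) (hZ0 t ht))
    (fun t ht => ?_) ?_
  · have h₁ := (hZ₁ t ht).div_sub_div_mul_div (hZ t ht) (hZ0 t ht)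
    exact ((hZ₂ t ht).div_sub_div_mul_div (hZ t ht) (hZ0 t ht)).sub (h₁.mul h₁)
  · have := hcont hZ; have := hcont hZ₁; have := hcont hZ₂
    fun_prop (disch := exact hZ0 _ ‹_›)

theorem integral_div_eq_log_sub_log {Z Z₁ : ℝ → ℝ} (hab : a ≤ b)
    (hZ : ∀ t ∈ Icc a b, HasDerivWithinAt Z (Z₁ t) (Icc a b) t)
    (hZ₁ : ContinuousOn Z₁ (Icc a b)) (hZ0 : ∀ t ∈ Icc a b, Z t ≠ 0) :
    ∫ t in a..b, Z₁ t / Z t = log (Z b) - log (Z a) := by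
  have hlog : ∀ t ∈ Icc a b, HasDerivWithinAt (fun s => log (Z s)) (Z₁ t / Z t) (Icc a b) t :=
    fun t ht => (hZ t ht).log (hZ0 t ht)
  refine intervalIntegral.integral_eq_sub_of_hasDerivAt_of_le hab
    (fun t ht => (hlog t ht).continuousWithinAt)
    (fun t ht => (hlog t (Ioo_subset_Icc_self ht)).hasDerivAt (Icc_mem_nhds ht.1 ht.2)) ?_
  refine ContinuousOn.intervalIntegrable ?_
  rw [uIcc_of_le hab]
  exact hZ₁.div (fun t ht => (hZ t ht).continuousWithinAt) hZ0

theorem trapezoidal_integral_zero_one (f : ℝ → ℝ) {N : ℕ} (hN : 0 < N) :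
    trapezoidal_integral f N 0 1
      = (∑ j ∈ Finset.range N, f (j / N)) / N + (f 1 - f 0) / (2 * N) := by
  obtain ⟨n, rfl⟩ := Nat.exists_eq_add_of_lt hN
  simp only [trapezoidal_integral, Finset.sum_range_succ']
  push_cast
  simp only [zero_add, sub_zero, mul_one, zero_div]
  field_simp
  ring

end Calculus

/-- `L'(η) = Z'_η / Z_η` for `L = log Z`, with `Z'` computed under the integral sign. -/
def logZpathDeriv (μ : Measure X) (q0 p : X → ℝ) (η : ℝ) : ℝ :=
  (∫ z, gammaPath q0 p η z * ell q0 p z ∂μ) / Zpath μ q0 p η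

section AnnealingPath

variable {μ : Measure X} {q0 p : X → ℝ}

theorem measurable_gammaPath (hq0 : Measurable q0) (hp : Measurable p) (η : ℝ) :
    Measurable (gammaPath q0 p η) :=
  Measurable.ite (hq0 (measurableSet_singleton 0)) measurable_const (by fun_prop)

omit [MeasurableSpace X] in
theorem gammaPath_zero : gammaPath q0 p 0 = q0 := by
  ext z
  by_cases hq : q0 z = 0 <;> simp [gammaPath, hq]

theorem gammaPath_one_ae (hpnn : ∀ z, 0 ≤ p z) (hsupp : ∀ᵐ z ∂μ, 0 < p z → 0 < q0 z) :
    gammaPath q0 p 1 =ᵐ[μ] p := by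
  filter_upwards [hsupp] with z hz
  by_cases hq : q0 z = 0
  · simp only [gammaPath, hq, if_true]
    by_contra hp
    exact (hz ((hpnn z).lt_of_ne hp)).ne' hq
  · simp [gammaPath, hq]

omit [MeasurableSpace X] in
theorem gammaPath_nonneg (hq0 : ∀ z, 0 ≤ q0 z) (hp : ∀ z, 0 ≤ p z) (η : ℝ) (z : X) :
    0 ≤ gammaPath q0 p η z := by
  unfold gammaPath
  split_ifs
  exacts [le_rfl, by have := hq0 z; have := hp z; positivity]

omit [MeasurableSpace X] in
theorem gammaPath_le_add (hq0 : ∀ z, 0 ≤ q0 z) (hp : ∀ z, 0 ≤ p z) {η : ℝ}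
    (hη : η ∈ Icc (0 : ℝ) 1) (z : X) : gammaPath q0 p η z ≤ q0 z + p z := by
  unfold gammaPath
  split_ifs
  · linarith [hq0 z, hp z]
  · calc q0 z ^ (1 - η) * p z ^ η ≤ (1 - η) * q0 z + η * p z :=
          geom_mean_le_arith_mean2_weighted (by linarith [hη.2]) hη.1 (hq0 z) (hp z) (by ring)
      _ ≤ q0 z + p z := by nlinarith [hq0 z, hp z, hη.1, hη.2]

omit [MeasurableSpace X] in
theorem tendsto_gammaPath_nhdsGT_zero (z : X) :
    Tendsto (fun η => gammaPath q0 p η z) (𝓝[>] 0) (𝓝 ({z | p z = 0}ᶜ.indicator q0 z)) := by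
  by_cases hq : q0 z = 0
  · simp [gammaPath, indicator_apply, hq]
  by_cases hp : p z = 0
  · refine tendsto_const_nhds.congr' (eventually_nhdsWithin_of_forall fun η (hη : 0 < η) => ?_)
    simp [gammaPath, hq, hp, zero_rpow hη.ne']
  · have hcont : ContinuousAt (fun η : ℝ => q0 z ^ (1 - η) * p z ^ η) 0 :=
      (continuousAt_const.rpow (by fun_prop) (.inl hq)).mul
        (continuousAt_const.rpow continuousAt_id (.inl hp))
    simpa [gammaPath, hq, hp] using (hcont.continuousWithinAt (s := Ioi 0)).tendsto

theorem tendsto_Zpath_nhdsGT_zero (hq0m : Measurable q0) (hpm : Measurable p)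
    (hq0nn : ∀ z, 0 ≤ q0 z) (hpnn : ∀ z, 0 ≤ p z) (hq0 : Integrable q0 μ) (hp : Integrable p μ) :
    Tendsto (Zpath μ q0 p) (𝓝[>] 0) (𝓝 (∫ z in {z | p z = 0}ᶜ, q0 z ∂μ)) := by
  have hs : MeasurableSet {z | p z = 0} := hpm (measurableSet_singleton 0)
  rw [← integral_indicator hs.compl]
  refine tendsto_integral_filter_of_dominated_convergence (fun z => q0 z + p z)
    (.of_forall fun η => (measurable_gammaPath hq0m hpm η).aestronglyMeasurable) ?_ (hq0.add hp)
    (.of_forall tendsto_gammaPath_nhdsGT_zero)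
  filter_upwards [Ioo_mem_nhdsGT zero_lt_one] with η hη
  refine .of_forall fun z => ?_
  rw [norm_of_nonneg (gammaPath_nonneg hq0nn hpnn η z)]
  exact gammaPath_le_add hq0nn hpnn (Ioo_subset_Icc_self hη) z

theorem ae_eq_zero_of_continuousWithinAt_Zpath (hq0m : Measurable q0) (hpm : Measurable p)
    (hq0nn : ∀ z, 0 ≤ q0 z) (hpnn : ∀ z, 0 ≤ p z) (hq0 : Integrable q0 μ) (hp : Integrable p μ)
    (hZ : ContinuousWithinAt (Zpath μ q0 p) (Ioi 0) 0) :
    ∀ᵐ z ∂μ, p z = 0 → q0 z = 0 := by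
  have hs : MeasurableSet {z | p z = 0} := hpm (measurableSet_singleton 0)
  have hlim := tendsto_nhds_unique hZ.tendsto
    (tendsto_Zpath_nhdsGT_zero hq0m hpm hq0nn hpnn hq0 hp)
  have hzero : ∫ z in {z | p z = 0}, q0 z ∂μ = 0 := by
    have hsplit := integral_add_compl hs hq0
    rw [← hlim, Zpath, gammaPath_zero] at hsplit
    linarith
  rw [setIntegral_eq_zero_iff_of_nonneg_ae (.of_forall hq0nn) hq0.integrableOn,
    EventuallyEq, ae_restrict_iff' hs] at hzero
  exact hzero

theorem log_piPath {η : ℝ} {z : X} (hq : 0 < q0 z) (hp : 0 < p z) (hZ : 0 < Zpath μ q0 p η) :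
    log (piPath μ q0 p η z) = log (q0 z) + η * ell q0 p z - log (Zpath μ q0 p η) := by
  rw [piPath, gammaPath, if_neg hq.ne', log_div (by positivity) hZ.ne',
    log_mul (by positivity) (by positivity), log_rpow hq, log_rpow hp, ell, log_div hp.ne' hq.ne']
  ring

theorem KLdiv_piPath (hgood : ∀ᵐ z ∂μ, q0 z ≠ 0 → 0 < q0 z ∧ 0 < p z) {a b : ℝ}
    (hγ : Integrable (gammaPath q0 p a) μ)
    (hγℓ : Integrable (fun z => gammaPath q0 p a z * ell q0 p z) μ)
    (hZa : 0 < Zpath μ q0 p a) (hZb : 0 < Zpath μ q0 p b) :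
    KLdiv μ (piPath μ q0 p a) (piPath μ q0 p b)
      = (a - b) * logZpathDeriv μ q0 p a + (log (Zpath μ q0 p b) - log (Zpath μ q0 p a)) := by
  have hpointwise : (fun z => piPath μ q0 p a z * log (piPath μ q0 p a z / piPath μ q0 p b z))
      =ᵐ[μ] fun z => (a - b) / Zpath μ q0 p a * (gammaPath q0 p a z * ell q0 p z)
        + (log (Zpath μ q0 p b) - log (Zpath μ q0 p a)) / Zpath μ q0 p a * gammaPath q0 p a z := by
    filter_upwards [hgood] with z hz
    by_cases hq : q0 z = 0
    · simp [piPath, gammaPath, hq]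
    obtain ⟨hq, hp⟩ := hz hq
    have hπa : 0 < piPath μ q0 p a z := div_pos (by simp [gammaPath, hq.ne']; positivity) hZa
    have hπb : 0 < piPath μ q0 p b z := div_pos (by simp [gammaPath, hq.ne']; positivity) hZb
    rw [log_div hπa.ne' hπb.ne', log_piPath hq hp hZa, log_piPath hq hp hZb, piPath]
    ring
  rw [KLdiv, integral_congr_ae hpointwise, integral_add (hγℓ.const_mul _) (hγ.const_mul _),
    integral_const_mul, integral_const_mul, logZpathDeriv]
  change _ + _ * Zpath μ q0 p a = _
  field_simp

theorem KLdiv_eq_neg_integral_mul_ell : KLdiv μ q0 p = -∫ z, q0 z * ell q0 p z ∂μ := by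
  rw [KLdiv, ← integral_neg]
  congr 1 with z
  rw [ell, ← inv_div, log_inv, mul_neg]


theorem sum_KLdiv_piPath (hgood : ∀ᵐ z ∂μ, q0 z ≠ 0 → 0 < q0 z ∧ 0 < p z)
    (hZ : ∀ η ∈ Icc (0 : ℝ) 1, Integrable (gammaPath q0 p η) μ ∧ 0 < Zpath μ q0 p η)
    (hZℓ : ∀ η ∈ Icc (0 : ℝ) 1, Integrable (fun z => gammaPath q0 p η z * ell q0 p z) μ)
    {K : ℕ} (hK : 0 < K) :
    ∑ k ∈ Finset.Icc 1 K,
        KLdiv μ (piPath μ q0 p (((k : ℝ) - 1) / K)) (piPath μ q0 p ((k : ℝ) / K))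
      = -(∑ j ∈ Finset.range K, logZpathDeriv μ q0 p (j / K)) / K
        + (log (Zpath μ q0 p 1) - log (Zpath μ q0 p 0)) := by
  have hmem : ∀ j ≤ K, (j : ℝ) / K ∈ Icc (0 : ℝ) 1 := fun j hj =>
    ⟨by positivity, div_le_one_of_le₀ (by exact_mod_cast hj) (Nat.cast_nonneg K)⟩
  let L : ℕ → ℝ := fun j => log (Zpath μ q0 p (j / K))
  have hterm : ∀ j ∈ Finset.range K,
      KLdiv μ (piPath μ q0 p (j / K)) (piPath μ q0 p ((j + 1) / K))
        = -logZpathDeriv μ q0 p (j / K) / K + (L (j + 1) - L j) := by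
    intro j hj
    have hj := Finset.mem_range.1 hj
    have hj₁ := hmem (j + 1) hj
    simp only [L]
    push_cast at hj₁ ⊢
    rw [KLdiv_piPath hgood (hZ _ (hmem j hj.le)).1 (hZℓ _ (hmem j hj.le))
      (hZ _ (hmem j hj.le)).2 (hZ _ hj₁).2]
    field_simp
    ring
  rw [← Finset.Ico_add_one_right_eq_Icc, Finset.sum_Ico_eq_sum_range, add_tsub_cancel_right]
  simp_rw [add_comm 1, Nat.cast_add, Nat.cast_one, add_sub_cancel_right]
  rw [Finset.sum_congr rfl hterm, Finset.sum_add_distrib, Finset.sum_range_sub, ← Finset.sum_div,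
    Finset.sum_neg_distrib]
  simp [L, hK.ne']

end AnnealingPath

theorem ais_gap_symmetrized_kl_quantitative_general
    (μ : Measure X) (q0 p : X → ℝ)
    (hq0m : Measurable q0) (hq0nn : ∀ z, 0 ≤ q0 z) (hq0one : ∫ z, q0 z ∂μ = 1)
    (hpm : Measurable p) (hpnn : ∀ z, 0 ≤ p z) (hpone : ∫ z, p z ∂μ = 1)
    (hsupp : ∀ᵐ z ∂μ, 0 < p z → 0 < q0 z)
    (hZ : ∀ η ∈ Set.Icc (0 : ℝ) 1,
      Integrable (gammaPath q0 p η) μ ∧ 0 < Zpath μ q0 p η)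
    (hZ' : ∀ η ∈ Set.Icc (0 : ℝ) 1,
      Integrable (fun z => gammaPath q0 p η z * ell q0 p z) μ ∧
      HasDerivWithinAt (Zpath μ q0 p)
        (∫ z, gammaPath q0 p η z * ell q0 p z ∂μ) (Set.Icc 0 1) η)
    (hZ'' : ∀ η ∈ Set.Icc (0 : ℝ) 1,
      Integrable (fun z => gammaPath q0 p η z * ell q0 p z ^ 2) μ ∧
      HasDerivWithinAt (fun t => ∫ z, gammaPath q0 p t z * ell q0 p z ∂μ)
        (∫ z, gammaPath q0 p η z * ell q0 p z ^ 2 ∂μ) (Set.Icc 0 1) η)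
    (hZ''' : ∀ η ∈ Set.Icc (0 : ℝ) 1,
      Integrable (fun z => gammaPath q0 p η z * ell q0 p z ^ 3) μ ∧
      HasDerivWithinAt (fun t => ∫ z, gammaPath q0 p t z * ell q0 p z ^ 2 ∂μ)
        (∫ z, gammaPath q0 p η z * ell q0 p z ^ 3 ∂μ) (Set.Icc 0 1) η)
    (hZ'''cont : ContinuousOn
      (fun η => ∫ z, gammaPath q0 p η z * ell q0 p z ^ 3 ∂μ) (Set.Icc 0 1)) :
    ∃ C : ℝ, 0 ≤ C ∧ ∀ K : ℕ, 1 ≤ K →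
      |(∑ k ∈ Finset.Icc 1 K,
          KLdiv μ (piPath μ q0 p (((k : ℝ) - 1) / K)) (piPath μ q0 p ((k : ℝ) / K)))
        - 1 / (2 * (K : ℝ)) * (KLdiv μ p q0 + KLdiv μ q0 p)| ≤ C / (K : ℝ) ^ 2 := by
  have hZ0 : Zpath μ q0 p 0 = 1 := by rw [Zpath, gammaPath_zero, hq0one]
  have hγ1 := gammaPath_one_ae hpnn hsupp (μ := μ)
  have hZ1 : Zpath μ q0 p 1 = 1 := (integral_congr_ae hγ1).trans hpone
  have hq0 : Integrable q0 μ := by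
    simpa only [gammaPath_zero] using (hZ 0 (left_mem_Icc.2 zero_le_one)).1
  have hp : Integrable p μ := (hZ 1 (right_mem_Icc.2 zero_le_one)).1.congr hγ1
  have hgood : ∀ᵐ z ∂μ, q0 z ≠ 0 → 0 < q0 z ∧ 0 < p z := by
    filter_upwards [ae_eq_zero_of_continuousWithinAt_Zpath hq0m hpm hq0nn hpnn hq0 hp
      ((hZ' 0 (left_mem_Icc.2 zero_le_one)).2.continuousWithinAt.mono_of_mem_nhdsWithin
        (Icc_mem_nhdsGT zero_lt_one))] with z hz hq
    exact ⟨(hq0nn z).lt_of_ne' hq, (hpnn z).lt_of_ne' (mt hz hq)⟩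
  obtain ⟨C, hC0, hC⟩ : ∃ C, 0 ≤ C ∧ ∀ N : ℕ, 0 < N →
      |trapezoidal_error (logZpathDeriv μ q0 p) N 0 1| ≤ C / N ^ 2 :=
    exists_trapezoidal_error_div_le zero_lt_one (fun t ht => (hZ' t ht).2)
    (fun t ht => (hZ'' t ht).2) (fun t ht => (hZ''' t ht).2) hZ'''cont
    (fun t ht => (hZ t ht).2.ne')
  have hint : ∫ t in (0 : ℝ)..1, logZpathDeriv μ q0 p t = 0 := by
    unfold logZpathDeriv
    rw [integral_div_eq_log_sub_log zero_le_one (fun t ht => (hZ' t ht).2)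
      (fun t ht => (hZ'' t ht).2.continuousWithinAt) (fun t ht => (hZ t ht).2.ne'), hZ0, hZ1,
      sub_self]
  have hKL : KLdiv μ p q0 + KLdiv μ q0 p = logZpathDeriv μ q0 p 1 - logZpathDeriv μ q0 p 0 := by
    rw [KLdiv_eq_neg_integral_mul_ell (q0 := q0), logZpathDeriv, logZpathDeriv, hZ0, hZ1,
      gammaPath_zero, div_one, div_one, sub_eq_add_neg]
    exact congrArg (· + _) (integral_congr_ae (hγ1.mul (.refl _ (ell q0 p)))).symm
  refine ⟨C, hC0, fun K hK => ?_⟩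
  rw [sum_KLdiv_piPath hgood hZ (fun η hη => (hZ' η hη).1) hK, hKL, hZ0, hZ1, ← abs_neg]
  convert hC K hK using 2
  rw [trapezoidal_error, trapezoidal_integral_zero_one _ hK, hint]
  ring

/-- With `Z_η` three times continuously differentiable (derivatives given by
differentiation under the integral sign), the AIS gap with equally spaced temperatures
`β_k = k/K` equals `(1/(2K))(D_KL(p‖q₀) + D_KL(q₀‖p))` up to an error bounded by `C/K²`. -/
theorem ais_gap_symmetrized_kl_quantitative
    (μ : Measure X) [SigmaFinite μ] (q0 p : X → ℝ)
    (hq0m : Measurable q0) (hq0nn : ∀ z, 0 ≤ q0 z) (hq0one : ∫ z, q0 z ∂μ = 1)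
    (hpm : Measurable p) (hpnn : ∀ z, 0 ≤ p z) (hpone : ∫ z, p z ∂μ = 1)
    (hsupp : ∀ᵐ z ∂μ, 0 < p z → 0 < q0 z)
    (hZ : ∀ η ∈ Set.Icc (0 : ℝ) 1,
      Integrable (gammaPath q0 p η) μ ∧ 0 < Zpath μ q0 p η)
    (hπint : ∀ β ∈ Set.Icc (0 : ℝ) 1,
      Integrable (fun z => piPath μ q0 p β z * (|ell q0 p z| + |Real.log (q0 z)|)) μ)
    (hZ' : ∀ η ∈ Set.Icc (0 : ℝ) 1,
      Integrable (fun z => gammaPath q0 p η z * ell q0 p z) μ ∧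
      HasDerivWithinAt (Zpath μ q0 p)
        (∫ z, gammaPath q0 p η z * ell q0 p z ∂μ) (Set.Icc 0 1) η)
    (hZ'' : ∀ η ∈ Set.Icc (0 : ℝ) 1,
      Integrable (fun z => gammaPath q0 p η z * ell q0 p z ^ 2) μ ∧
      HasDerivWithinAt (fun t => ∫ z, gammaPath q0 p t z * ell q0 p z ∂μ)
        (∫ z, gammaPath q0 p η z * ell q0 p z ^ 2 ∂μ) (Set.Icc 0 1) η)
    (hZ''' : ∀ η ∈ Set.Icc (0 : ℝ) 1,
      Integrable (fun z => gammaPath q0 p η z * ell q0 p z ^ 3) μ ∧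
      HasDerivWithinAt (fun t => ∫ z, gammaPath q0 p t z * ell q0 p z ^ 2 ∂μ)
        (∫ z, gammaPath q0 p η z * ell q0 p z ^ 3 ∂μ) (Set.Icc 0 1) η)
    (hZ'cont : ContinuousOn
      (fun η => ∫ z, gammaPath q0 p η z * ell q0 p z ∂μ) (Set.Icc 0 1))
    (hZ''cont : ContinuousOn
      (fun η => ∫ z, gammaPath q0 p η z * ell q0 p z ^ 2 ∂μ) (Set.Icc 0 1))
    (hZ'''cont : ContinuousOn
      (fun η => ∫ z, gammaPath q0 p η z * ell q0 p z ^ 3 ∂μ) (Set.Icc 0 1)) :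
    ∃ C : ℝ, 0 ≤ C ∧ ∀ K : ℕ, 1 ≤ K →
      |(∑ k ∈ Finset.Icc 1 K,
          KLdiv μ (piPath μ q0 p (((k : ℝ) - 1) / K)) (piPath μ q0 p ((k : ℝ) / K)))
        - 1 / (2 * (K : ℝ)) * (KLdiv μ p q0 + KLdiv μ q0 p)| ≤ C / (K : ℝ) ^ 2 :=
  ais_gap_symmetrized_kl_quantitative_general μ q0 p hq0m hq0nn hq0one hpm hpnn hpone hsupp hZ hZ'
    hZ'' hZ''' hZ'''cont
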